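/- Let x, y, u, v be complex numbers satisfying u + v = xy and uv = x² + y² − 4. Then in ℂ[[q]]: 2·(∑_{n≥1} T_{4n−2}(x/2) q^{2n²−2n})·(∑_{n≥1} T_{4n−2}(y/2) q^{2n²−2n}) = (1 + 2∑_{n≥1} T_{4n}(u/2) q^{4n²})·(∑_{n≥1} T_{4n−2}(v/2) q^{4n²−4n}) + (1 + 2∑_{n≥1} T_{4n}(v/2) q^{4n²})·(∑_{n≥1} T_{4n−2}(u/2) q^{4n²−4n}). -/

import Mathlib

/-- The formal power series `∑_{n ≥ 1} c(n) q^{e(n)}` in `ℂ[[q]]`, defined coefficientwise.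
(For each exponent function `e` used here, any `n ≥ 1` with `e n = k` satisfies `n ≤ k + 1`,
so the truncated range captures every term.) -/
noncomputable def mkSum (e : ℕ → ℕ) (c : ℕ → ℂ) : PowerSeries ℂ :=
  PowerSeries.mk fun k => ∑ n ∈ Finset.range (k + 2), if 1 ≤ n ∧ e n = k then c n else 0

/-!
Put `x / 2 = cosh s` and `y / 2 = cosh t`. The two relations say that `u / 2` and `v / 2` are
`cosh (s + t)` and `cosh (s - t)` in some order, and `T_N (cosh s) = (e^{Ns} + e^{-Ns}) / 2`.
The exponents `2n² - 2n` and `4n² - 4n` are invariant under `n ↦ 1 - n`, and `4n²` under `n ↦ -n`,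
so each one-sided Chebyshev series is, up to the factor `2` (and the constant term `1`), a
two-sided series of pure exponentials, e.g.
`2 ∑_{n ≥ 1} T_{4n-2}(cosh s) q^{2n²-2n} = ∑_{n ∈ ℤ} e^{(4n-2)s} q^{2n²-2n}`.
The product of two such series is a sum over `ℤ²`. Split `(m, n)` by the parity of `m + n` and
substitute `(m, n) = (r + k, r - k + 1)`, resp. `(r + k, k - r)`: then
`2m² - 2m + 2n² - 2n = 4r² + 4k² - 4k` and `(4m - 2)s + (4n - 2)t = 4r(s ± t) + (4k - 2)(s ∓ t)`,
which are exactly the terms of the two products on the right-hand side.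
-/

open PowerSeries PowerSeries.WithPiTopology Complex

section MonomialFamilies

variable {R ι κ : Type*} [CommSemiring R] [TopologicalSpace R]

theorem summable_monomial {e : ι → ℕ} (he : ∀ k, {i | e i ≤ k}.Finite) (c : ι → R) :
    Summable fun i => monomial (e i) (c i) := by
  rw [summable_iff_summable_coeff]
  intro k
  refine summable_of_ne_finset_zero (s := (he k).toFinset) fun i hi => ?_
  rw [Set.Finite.mem_toFinset, Set.mem_ofPred_eq] at hi
  rw [coeff_monomial, if_neg (by omega)]

theorem HasSum.mul_monomial [T3Space R] [IsTopologicalSemiring R] {e : ι → ℕ} {e' : κ → ℕ}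
    (he : ∀ k, {i | e i ≤ k}.Finite) (he' : ∀ k, {j | e' j ≤ k}.Finite)
    {c : ι → R} {c' : κ → R} {f g : R⟦X⟧}
    (hf : HasSum (fun i => monomial (e i) (c i)) f)
    (hg : HasSum (fun j => monomial (e' j) (c' j)) g) :
    HasSum (fun p : ι × κ => monomial (e p.1) (c p.1) * monomial (e' p.2) (c' p.2)) (f * g) := by
  -- instance search does not unfold `R⟦X⟧` to the product space `(Unit →₀ ℕ) → R` here
  have : T3Space R⟦X⟧ := inferInstanceAs (T3Space ((Unit →₀ ℕ) → R))
  have : IsTopologicalSemiring R⟦X⟧ := inferInstance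
  have hfin : ∀ k, {p : ι × κ | e p.1 + e' p.2 ≤ k}.Finite := fun k =>
    ((he k).prod (he' k)).subset fun p (hp : e p.1 + e' p.2 ≤ k) =>
      Set.mk_mem_prod (show e p.1 ≤ k by omega) (show e' p.2 ≤ k by omega)
  have hsum := summable_monomial hfin fun p => c p.1 * c' p.2
  simp only [← monomial_mul_monomial] at hsum
  exact HasSum.mul (f := fun i => monomial (e i) (c i)) (g := fun j => monomial (e' j) (c' j))
    hf hg hsum

end MonomialFamilies

section IntFolding

variable {M : Type*} [TopologicalSpace M] [T2Space M] {f : ℤ → M} {a : M}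

theorem Summable.hasSum_of_hasSum_nat_add_neg_add_one [AddCommMonoid M] (hf : Summable f)
    (h : HasSum (fun n : ℕ => f n + f (-(n + 1))) a) : HasSum f a :=
  hf.hasSum.nat_add_neg_add_one.unique h ▸ hf.hasSum

theorem Summable.hasSum_of_hasSum_nat_add_one_add_neg [AddCommGroup M] [IsTopologicalAddGroup M]
    (hf : Summable f) (h : HasSum (fun n : ℕ => f (n + 1) + f (-(n + 1))) a) :
    HasSum f (f 0 + a) := by
  have hpairs : HasSum (fun n : ℕ => f n + f (-n)) (a + (f 0 + f 0)) := by
    simpa using (hasSum_nat_add_iff (f := fun n : ℕ => f n + f (-n)) 1).1 (by simpa using h)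
  have htsum : ∑' n, f n = f 0 + a := by
    linear_combination (norm := abel_nf) hf.hasSum.nat_add_neg.unique hpairs
  exact htsum ▸ hf.hasSum

end IntFolding

theorem finite_setOf_le_of_natAbs_le {e : ℤ → ℕ} (h : ∀ n, n.natAbs ≤ e n + 1) (k : ℕ) :
    {n | e n ≤ k}.Finite :=
  (Set.finite_Icc (-(k + 1 : ℤ)) (k + 1)).subset fun n (hn : e n ≤ k) => by
    have := h n
    constructor <;> omega

def pronic (n : ℤ) : ℕ := (n ^ 2 - n).toNat

theorem natCast_pronic (n : ℤ) : (pronic n : ℤ) = n ^ 2 - n :=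
  Int.toNat_of_nonneg (sub_nonneg.2 (Int.le_self_sq n))

theorem pronic_natCast (n : ℕ) : pronic n = n ^ 2 - n := by
  have := Nat.le_self_pow two_ne_zero n
  zify [this]
  exact natCast_pronic n

theorem pronic_one_sub (n : ℤ) : pronic (1 - n) = pronic n := by
  zify
  rw [natCast_pronic, natCast_pronic]
  ring

theorem natAbs_le_pronic_add_one (n : ℤ) : n.natAbs ≤ pronic n + 1 := by
  zify
  rw [natCast_pronic]
  rcases abs_cases n with ⟨h, -⟩ | ⟨h, -⟩ <;> rw [h] <;> nlinarith [sq_nonneg (n - 1)]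

theorem finite_setOf_mul_pronic_le {d : ℕ} (hd : 0 < d) (k : ℕ) :
    {n | d * pronic n ≤ k}.Finite :=
  finite_setOf_le_of_natAbs_le (fun n =>
    (natAbs_le_pronic_add_one n).trans (by gcongr; exact Nat.le_mul_of_pos_left _ hd)) k

theorem finite_setOf_four_mul_natAbs_sq_le (k : ℕ) : {n : ℤ | 4 * n.natAbs ^ 2 ≤ k}.Finite :=
  finite_setOf_le_of_natAbs_le (fun n => by nlinarith [Nat.le_self_pow two_ne_zero n.natAbs]) k

theorem hasSum_mkSum {e : ℕ → ℕ} (he : ∀ n, 1 ≤ n → n ≤ e n + 1) (c : ℕ → ℂ) :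
    HasSum (fun k : ℕ => monomial (e (k + 1)) (c (k + 1))) (mkSum e c) := by
  rw [hasSum_iff_hasSum_coeff]
  intro k
  rw [mkSum, coeff_mk, Finset.sum_range_succ']
  simp only [coeff_monomial, le_add_iff_nonneg_left, zero_le, true_and, eq_comm (a := k),
    nonpos_iff_eq_zero, one_ne_zero, false_and, if_false, add_zero]
  refine hasSum_sum_of_ne_finset_zero fun n hn => if_neg fun h => hn (Finset.mem_range.2 ?_)
  have := he (n + 1) (by omega)
  omega

theorem Polynomial.Chebyshev.T_complex_cosh_add_self (n : ℤ) (s : ℂ) :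
    (T ℂ n).eval (cosh s) + (T ℂ n).eval (cosh s) = cexp (n * s) + cexp (-(n * s)) := by
  rw [← two_mul, T_complex_cosh, two_cosh]

noncomputable def chebOddSeries (d : ℕ) (w : ℂ) : ℂ⟦X⟧ :=
  mkSum (fun n => d * n ^ 2 - d * n) fun n => (Polynomial.Chebyshev.T ℂ (4 * (n : ℤ) - 2)).eval w

noncomputable def chebEvenSeries (w : ℂ) : ℂ⟦X⟧ :=
  mkSum (fun n => 4 * n ^ 2) fun n => (Polynomial.Chebyshev.T ℂ (4 * (n : ℤ))).eval w

noncomputable def oddTerm (d : ℕ) (s : ℂ) (n : ℤ) : ℂ⟦X⟧ :=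
  monomial (d * pronic n) (cexp ((4 * n - 2) * s))

noncomputable def evenTerm (s : ℂ) (n : ℤ) : ℂ⟦X⟧ :=
  monomial (4 * n.natAbs ^ 2) (cexp (4 * n * s))

theorem hasSum_oddTerm {d : ℕ} (hd : 0 < d) (s : ℂ) :
    HasSum (oddTerm d s) (2 * chebOddSeries d (cosh s)) := by
  have hsum : Summable (oddTerm d s ∘ Equiv.addRight 1) :=
    (Equiv.addRight (1 : ℤ)).summable_iff.2 <|
      summable_monomial (finite_setOf_mul_pronic_le hd) fun n => cexp ((4 * n - 2) * s)
  have he : ∀ n, 1 ≤ n → n ≤ d * n ^ 2 - d * n + 1 := fun n hn => by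
    have : n ≤ n ^ 2 - n + 1 := by zify [Nat.le_self_pow two_ne_zero n]; nlinarith
    calc n ≤ n ^ 2 - n + 1 := this
      _ ≤ d * (n ^ 2 - n) + 1 := by gcongr; exact Nat.le_mul_of_pos_left _ hd
      _ = d * n ^ 2 - d * n + 1 := by rw [Nat.mul_sub]
  rw [← (Equiv.addRight (1 : ℤ)).hasSum_iff]
  refine hsum.hasSum_of_hasSum_nat_add_neg_add_one ?_
  rw [two_mul]
  refine ((hasSum_mkSum he _).add (hasSum_mkSum he _)).congr_fun fun k => ?_
  simp only [Function.comp_apply, Equiv.coe_addRight]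
  rw [oddTerm, oddTerm, show -((k : ℤ) + 1) + 1 = 1 - (k + 1) by ring, pronic_one_sub, ← map_add,
    ← map_add, Polynomial.Chebyshev.T_complex_cosh_add_self, ← Nat.cast_add_one, pronic_natCast,
    Nat.mul_sub]
  congr 2 <;> push_cast <;> ring_nf

theorem hasSum_evenTerm (s : ℂ) :
    HasSum (evenTerm s) (1 + 2 * chebEvenSeries (cosh s)) := by
  have hsum : Summable (evenTerm s) :=
    summable_monomial finite_setOf_four_mul_natAbs_sq_le fun n => cexp (4 * n * s)
  have h0 : evenTerm s 0 = 1 := by simp [evenTerm]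
  have he : ∀ n, 1 ≤ n → n ≤ 4 * n ^ 2 + 1 := fun n _ => by
    nlinarith [Nat.le_self_pow two_ne_zero n]
  rw [← h0, two_mul]
  refine hsum.hasSum_of_hasSum_nat_add_one_add_neg ?_
  refine ((hasSum_mkSum he _).add (hasSum_mkSum he _)).congr_fun fun k => ?_
  rw [evenTerm, evenTerm, Int.natAbs_neg, ← map_add, ← map_add,
    Polynomial.Chebyshev.T_complex_cosh_add_self]
  congr 2 <;> push_cast <;> ring_nf

def parityEquiv : (ℤ × ℤ) ⊕ (ℤ × ℤ) ≃ ℤ × ℤ where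
  toFun
    | .inl (r, k) => (r + k, r - k + 1)
    | .inr (r, k) => (r + k, k - r)
  invFun p := if (p.1 + p.2) % 2 = 1 then .inl ((p.1 + p.2 - 1) / 2, (p.1 - p.2 + 1) / 2)
    else .inr ((p.1 - p.2) / 2, (p.1 + p.2) / 2)
  left_inv := by
    rintro (⟨r, k⟩ | ⟨r, k⟩) <;> dsimp only
    · rw [if_pos (by omega)]; simp only [Sum.inl.injEq, Prod.mk.injEq]; omega
    · rw [if_neg (by omega)]; simp only [Sum.inr.injEq, Prod.mk.injEq]; omega
  right_inv := by
    rintro ⟨m, n⟩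
    dsimp only
    split_ifs <;> simp only [Prod.mk.injEq] <;> omega

theorem hasSum_oddTerm_mul_oddTerm {s t : ℂ} {P₁ P₂ Q₁ Q₂ : ℂ⟦X⟧}
    (hP₁ : HasSum (evenTerm (s + t)) P₁) (hP₂ : HasSum (evenTerm (s - t)) P₂)
    (hQ₁ : HasSum (oddTerm 4 (s + t)) Q₁) (hQ₂ : HasSum (oddTerm 4 (s - t)) Q₂) :
    HasSum (fun p : ℤ × ℤ => oddTerm 2 s p.1 * oddTerm 2 t p.2) (P₁ * Q₂ + P₂ * Q₁) := by
  have hfin := finite_setOf_mul_pronic_le four_pos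
  rw [← parityEquiv.hasSum_iff]
  refine HasSum.sum
    ((HasSum.mul_monomial finite_setOf_four_mul_natAbs_sq_le hfin hP₁ hQ₂).congr_fun ?_)
    ((HasSum.mul_monomial finite_setOf_four_mul_natAbs_sq_le hfin hP₂ hQ₁).congr_fun ?_)
  all_goals
    rintro ⟨r, k⟩
    simp only [Function.comp_apply, parityEquiv, Equiv.coe_fn_mk, oddTerm, monomial_mul_monomial,
      ← exp_add]
    congr 2
    · zify
      simp only [natCast_pronic, sq_abs]
      ring
    · push_cast
      ring

theorem two_mul_chebOddSeries_mul_chebOddSeries (s t : ℂ) :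
    2 * (chebOddSeries 2 (cosh s) * chebOddSeries 2 (cosh t)) =
      (1 + 2 * chebEvenSeries (cosh (s + t))) * chebOddSeries 4 (cosh (s - t)) +
        (1 + 2 * chebEvenSeries (cosh (s - t))) * chebOddSeries 4 (cosh (s + t)) := by
  have hfin := finite_setOf_mul_pronic_le two_pos
  have hprod := HasSum.mul_monomial hfin hfin (hasSum_oddTerm two_pos s) (hasSum_oddTerm two_pos t)
  have h := hprod.unique (hasSum_oddTerm_mul_oddTerm (hasSum_evenTerm _) (hasSum_evenTerm _)
    (hasSum_oddTerm four_pos _) (hasSum_oddTerm four_pos _))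
  have h2 : (2 : ℂ⟦X⟧) ≠ 0 := fun h => by simpa [map_ofNat] using congrArg constantCoeff h
  exact mul_left_cancel₀ h2 (by linear_combination h)

theorem eq_and_eq_or_eq_and_eq_of_add_eq_of_mul_eq {K : Type*} [CommRing K] [NoZeroDivisors K]
    {u v a b : K} (hs : u + v = a + b) (hp : u * v = a * b) : u = a ∧ v = b ∨ u = b ∧ v = a := by
  have : (u - a) * (u - b) = 0 := by linear_combination u * hs - hp
  rcases mul_eq_zero.1 this with h | h
  · exact .inl ⟨by linear_combination h, by linear_combination hs - h⟩
  · exact .inr ⟨by linear_combination h, by linear_combination hs - h⟩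

theorem Complex.exists_cosh_eq (w : ℂ) : ∃ s, cosh s = w :=
  let ⟨α, hα⟩ := cos_surjective w
  ⟨α * I, by rw [cosh_mul_I, hα]⟩

/-- If complex numbers `x, y, u, v` satisfy `u + v = xy` and `uv = x² + y² - 4`, then in `ℂ[[q]]`:
`2 (∑ T_{4n-2}(x/2) q^{2n²-2n})(∑ T_{4n-2}(y/2) q^{2n²-2n})
  = (1 + 2∑ T_{4n}(u/2) q^{4n²})(∑ T_{4n-2}(v/2) q^{4n²-4n})
    + (1 + 2∑ T_{4n}(v/2) q^{4n²})(∑ T_{4n-2}(u/2) q^{4n²-4n})`. -/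
theorem cheby_xyuv_odd (x y u v : ℂ) (h1 : u + v = x * y) (h2 : u * v = x ^ 2 + y ^ 2 - 4) :
    2 * ((mkSum (fun n => 2 * n ^ 2 - 2 * n) fun n =>
        (Polynomial.Chebyshev.T ℂ (4 * (n : ℤ) - 2)).eval (x / 2)) *
      (mkSum (fun n => 2 * n ^ 2 - 2 * n) fun n =>
        (Polynomial.Chebyshev.T ℂ (4 * (n : ℤ) - 2)).eval (y / 2))) =
    (1 + 2 * mkSum (fun n => 4 * n ^ 2) fun n =>
        (Polynomial.Chebyshev.T ℂ (4 * (n : ℤ))).eval (u / 2)) *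
      (mkSum (fun n => 4 * n ^ 2 - 4 * n) fun n =>
        (Polynomial.Chebyshev.T ℂ (4 * (n : ℤ) - 2)).eval (v / 2)) +
    (1 + 2 * mkSum (fun n => 4 * n ^ 2) fun n =>
        (Polynomial.Chebyshev.T ℂ (4 * (n : ℤ))).eval (v / 2)) *
      (mkSum (fun n => 4 * n ^ 2 - 4 * n) fun n =>
        (Polynomial.Chebyshev.T ℂ (4 * (n : ℤ) - 2)).eval (u / 2)) := by
  show 2 * (chebOddSeries 2 (x / 2) * chebOddSeries 2 (y / 2)) =
    (1 + 2 * chebEvenSeries (u / 2)) * chebOddSeries 4 (v / 2) +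
      (1 + 2 * chebEvenSeries (v / 2)) * chebOddSeries 4 (u / 2)
  obtain ⟨s, hs⟩ := exists_cosh_eq (x / 2)
  obtain ⟨t, ht⟩ := exists_cosh_eq (y / 2)
  have hx : x = 2 * cosh s := by rw [hs]; ring
  have hy : y = 2 * cosh t := by rw [ht]; ring
  have hsum : u + v = 2 * cosh (s + t) + 2 * cosh (s - t) := by
    rw [h1, hx, hy, cosh_add, cosh_sub]; ring
  have hprod : u * v = 2 * cosh (s + t) * (2 * cosh (s - t)) := by
    rw [h2, hx, hy, cosh_add, cosh_sub]
    linear_combination (-4 * sinh t ^ 2) * cosh_sq s + (4 - 4 * cosh s ^ 2) * cosh_sq t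
  rw [← hs, ← ht]
  rcases eq_and_eq_or_eq_and_eq_of_add_eq_of_mul_eq hsum hprod with ⟨rfl, rfl⟩ | ⟨rfl, rfl⟩ <;>
    simp only [mul_div_cancel_left₀ _ (two_ne_zero' ℂ)]
  · exact two_mul_chebOddSeries_mul_chebOddSeries s t
  · exact (two_mul_chebOddSeries_mul_chebOddSeries s t).trans (add_comm _ _)
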